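/- arXiv:1309.7253 — 2 statements merged into one kernel-verified Lean document; each statement's English description precedes it below -/
import Mathlib

section
/- Let C be a totally antisymmetric 3-tensor on a D-dimensional real vector space and I an endomorphism with I² = -id. Define H(C,I)_{μνλ} = (1/4)(C_{μνλ} - I_μ^ρ I_ν^σ C_{ρσλ} - I_λ^ρ I_μ^σ C_{ρσν} - I_ν^ρ I_λ^σ C_{ρσμ}). Then H is a projector in the sense that H(H(C,I),I) = H(C,I). -/
open Finset Matrix

noncomputable section

/-- 3-dimensional Levi-Civita symbol (0-indexed). -/
def eps3 (a b c : Fin 3) : ℝ :=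
  (((b:ℕ):ℝ) - ((a:ℕ):ℝ)) * (((c:ℕ):ℝ) - ((a:ℕ):ℝ)) * (((c:ℕ):ℝ) - ((b:ℕ):ℝ)) / 2

/-- 4-dimensional Levi-Civita symbol (0-indexed). -/
def eps4 (a b c d : Fin 4) : ℝ :=
  (((b:ℕ):ℝ) - ((a:ℕ):ℝ)) * (((c:ℕ):ℝ) - ((a:ℕ):ℝ)) * (((d:ℕ):ℝ) - ((a:ℕ):ℝ)) *
    (((c:ℕ):ℝ) - ((b:ℕ):ℝ)) * (((d:ℕ):ℝ) - ((b:ℕ):ℝ)) * (((d:ℕ):ℝ) - ((c:ℕ):ℝ)) / 12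

/-- Kronecker delta. -/
def delta {n : ℕ} (i j : Fin n) : ℝ := if i = j then 1 else 0

/-- Self-dual 't Hooft symbol η^a_{BC}.  Indices `0,1,2 : Fin 4` play the role of
the indices `1,2,3` of the paper, and `3 : Fin 4` plays the role of the index `4`. -/
def eta (a : Fin 3) (B C : Fin 4) : ℝ :=
  if hB : (B:ℕ) < 3 then
    if hC : (C:ℕ) < 3 then eps3 a ⟨B, hB⟩ ⟨C, hC⟩
    else if (B:ℕ) = (a:ℕ) then 1 else 0
  else
    if (C:ℕ) < 3 then (if (C:ℕ) = (a:ℕ) then -1 else 0) else 0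

/-- Anti-self-dual 't Hooft symbol η̄^a_{BC}. -/
def etabar (a : Fin 3) (B C : Fin 4) : ℝ :=
  if hB : (B:ℕ) < 3 then
    if hC : (C:ℕ) < 3 then eps3 a ⟨B, hB⟩ ⟨C, hC⟩
    else if (B:ℕ) = (a:ℕ) then -1 else 0
  else
    if (C:ℕ) < 3 then (if (C:ℕ) = (a:ℕ) then 1 else 0) else 0

/-- The (anti)holomorphic projection H(C,I) of a totally antisymmetric 3-tensor C. -/
def Hten {D : ℕ} (C : Fin D → Fin D → Fin D → ℝ) (I : Matrix (Fin D) (Fin D) ℝ)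
    (μ ν lam : Fin D) : ℝ :=
  (1/4) * (C μ ν lam
    - ∑ ρ : Fin D, ∑ σ : Fin D, I μ ρ * I ν σ * C ρ σ lam
    - ∑ ρ : Fin D, ∑ σ : Fin D, I lam ρ * I μ σ * C ρ σ ν
    - ∑ ρ : Fin D, ∑ σ : Fin D, I ν ρ * I lam σ * C ρ σ μ)


/-!
Let `s₁, s₂, s₃` be the action of `I` on the first, second and third slot of a 3-tensor and `r`
the cyclic rotation of the slots. The `sᵢ` commute and square to `-1`, `r` conjugates
`s₁ ↦ s₃ ↦ s₂ ↦ s₁`, and `H = (1 - t - r t - r² t) / 4` with `t = s₁ s₂`.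
An antisymmetric `C` is fixed by `r`, and for such `C` these relations give `r (H C) = H C` and
`t (H C) = -H C`; hence `H (H C) = (H C + H C + r (H C) + r² (H C)) / 4 = H C`.
-/

abbrev Tensor3 (n R : Type*) := n → n → n → R

namespace Tensor3

variable {n R : Type*} [CommRing R]

def rotate : Tensor3 n R →ₗ[R] Tensor3 n R where
  toFun T i j k := T k i j
  map_add' _ _ := rfl
  map_smul' _ _ := rfl

lemma rotate_rotate_rotate (T : Tensor3 n R) : rotate (rotate (rotate T)) = T := rfl

variable [Fintype n]

def mulSlot₁ (I : Matrix n n R) : Tensor3 n R →ₗ[R] Tensor3 n R where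
  toFun T i j k := (I *ᵥ fun ρ => T ρ j k) i
  map_add' _ _ := by ext; exact congrFun (mulVec_add I _ _) _
  map_smul' c _ := by ext; exact congrFun (mulVec_smul I c _) _

def mulSlot₂ (I : Matrix n n R) : Tensor3 n R →ₗ[R] Tensor3 n R where
  toFun T i j k := (I *ᵥ fun ρ => T i ρ k) j
  map_add' _ _ := by ext; exact congrFun (mulVec_add I _ _) _
  map_smul' c _ := by ext; exact congrFun (mulVec_smul I c _) _

def mulSlot₃ (I : Matrix n n R) : Tensor3 n R →ₗ[R] Tensor3 n R where
  toFun T i j k := (I *ᵥ fun ρ => T i j ρ) k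
  map_add' _ _ := by ext; exact congrFun (mulVec_add I _ _) _
  map_smul' c _ := by ext; exact congrFun (mulVec_smul I c _) _

def twist (I : Matrix n n R) : Tensor3 n R →ₗ[R] Tensor3 n R := mulSlot₁ I ∘ₗ mulSlot₂ I

variable {I : Matrix n n R} (T : Tensor3 n R)

lemma rotate_mulSlot₁ : rotate (mulSlot₁ I T) = mulSlot₃ I (rotate T) := rfl

lemma rotate_mulSlot₂ : rotate (mulSlot₂ I T) = mulSlot₁ I (rotate T) := rfl

lemma rotate_mulSlot₃ : rotate (mulSlot₃ I T) = mulSlot₂ I (rotate T) := rfl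

lemma mulSlot₂_mulSlot₁ : mulSlot₂ I (mulSlot₁ I T) = mulSlot₁ I (mulSlot₂ I T) := by
  ext i j k
  simp only [mulSlot₁, mulSlot₂, LinearMap.coe_mk, AddHom.coe_mk, mulVec, dotProduct, mul_sum]
  rw [sum_comm]; simp only [mul_left_comm]

lemma mulSlot₃_mulSlot₁ : mulSlot₃ I (mulSlot₁ I T) = mulSlot₁ I (mulSlot₃ I T) := by
  ext i j k
  simp only [mulSlot₁, mulSlot₃, LinearMap.coe_mk, AddHom.coe_mk, mulVec, dotProduct, mul_sum]
  rw [sum_comm]; simp only [mul_left_comm]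

lemma mulSlot₃_mulSlot₂ : mulSlot₃ I (mulSlot₂ I T) = mulSlot₂ I (mulSlot₃ I T) := by
  ext i j k
  simp only [mulSlot₂, mulSlot₃, LinearMap.coe_mk, AddHom.coe_mk, mulVec, dotProduct, mul_sum]
  rw [sum_comm]; simp only [mul_left_comm]

variable [DecidableEq n]

lemma mulVec_mulVec_of_mul_self_eq_neg_one (hI : I * I = -1) (v : n → R) :
    I *ᵥ (I *ᵥ v) = -v := by
  rw [mulVec_mulVec, hI, neg_mulVec, one_mulVec]

lemma mulSlot₁_mulSlot₁ (hI : I * I = -1) : mulSlot₁ I (mulSlot₁ I T) = -T := by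
  ext i j k; exact congrFun (mulVec_mulVec_of_mul_self_eq_neg_one hI _) i

lemma mulSlot₂_mulSlot₂ (hI : I * I = -1) : mulSlot₂ I (mulSlot₂ I T) = -T := by
  ext i j k; exact congrFun (mulVec_mulVec_of_mul_self_eq_neg_one hI _) j

lemma twist_twist (hI : I * I = -1) : twist I (twist I T) = T := by
  simp only [twist, LinearMap.comp_apply]
  rw [mulSlot₂_mulSlot₁, mulSlot₁_mulSlot₁ _ hI, mulSlot₂_mulSlot₂ _ hI, neg_neg]

variable {T}

lemma twist_rotate_twist (hI : I * I = -1) (hT : rotate T = T) :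
    twist I (rotate (twist I T)) = -rotate (rotate (twist I T)) := by
  simp only [twist, LinearMap.comp_apply, rotate_mulSlot₁, rotate_mulSlot₂, rotate_mulSlot₃, hT,
    mulSlot₃_mulSlot₁, mulSlot₃_mulSlot₂, mulSlot₂_mulSlot₁, mulSlot₁_mulSlot₁ _ hI]

lemma twist_rotate_rotate_twist (hI : I * I = -1) (hT : rotate T = T) :
    twist I (rotate (rotate (twist I T))) = -rotate (twist I T) := by
  simp only [twist, LinearMap.comp_apply, rotate_mulSlot₁, rotate_mulSlot₂, rotate_mulSlot₃, hT,
    mulSlot₃_mulSlot₁, mulSlot₃_mulSlot₂, mulSlot₂_mulSlot₂ _ hI, map_neg]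

end Tensor3

open Tensor3

lemma Hten_eq_smul {D : ℕ} (C : Tensor3 (Fin D) ℝ) (I : Matrix (Fin D) (Fin D) ℝ) :
    Hten C I = (1 / 4 : ℝ) •
      (C - twist I C - rotate (twist I C) - rotate (rotate (twist I C))) := by
  ext i j k
  simp [Hten, twist, mulSlot₁, mulSlot₂, rotate, mulVec, dotProduct, mul_sum, mul_assoc]

section Hten

variable {D : ℕ} {C : Tensor3 (Fin D) ℝ} {I : Matrix (Fin D) (Fin D) ℝ}

lemma rotate_eq_self_of_antisymm (hC1 : ∀ μ ν lam, C μ ν lam = -C ν μ lam)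
    (hC2 : ∀ μ ν lam, C μ ν lam = -C μ lam ν) : rotate C = C := by
  ext i j k
  change C k i j = C i j k
  rw [hC1, hC2, neg_neg]

lemma rotate_Hten (hC : rotate C = C) : rotate (Hten C I) = Hten C I := by
  rw [Hten_eq_smul, map_smul, map_sub, map_sub, map_sub, rotate_rotate_rotate, hC]
  module

lemma twist_Hten (hI : I * I = -1) (hC : rotate C = C) : twist I (Hten C I) = -Hten C I := by
  rw [Hten_eq_smul, map_smul, map_sub, map_sub, map_sub, twist_twist _ hI,
    twist_rotate_twist hI hC, twist_rotate_rotate_twist hI hC]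
  module

end Hten

theorem Hten_projector {D : ℕ} (C : Fin D → Fin D → Fin D → ℝ)
    (hC1 : ∀ μ ν lam, C μ ν lam = -C ν μ lam)
    (hC2 : ∀ μ ν lam, C μ ν lam = -C μ lam ν)
    (I : Matrix (Fin D) (Fin D) ℝ) (hI : I * I = -1) :
    ∀ μ ν lam : Fin D,
      Hten (fun x y z => Hten C I x y z) I μ ν lam = Hten C I μ ν lam := by
  have hC : rotate C = C := rotate_eq_self_of_antisymm hC1 hC2
  suffices Hten (Hten C I) I = Hten C I from
    fun μ ν lam => congrFun (congrFun (congrFun this μ) ν) lam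
  rw [Hten_eq_smul (Hten C I), twist_Hten hI hC, map_neg, map_neg, rotate_Hten hC, rotate_Hten hC]
  module
end
end

section
/- Let C be a totally antisymmetric 3-tensor on a D-dimensional real vector space and I an endomorphism with I² = -id such that I_{μν} (with index lowered by the standard metric) is antisymmetric. Then H(C,I)_{μνλ} defined as (1/4)(C_{μνλ} - I_μ^ρ I_ν^σ C_{ρσλ} - I_λ^ρ I_μ^σ C_{ρσν} - I_ν^ρ I_λ^σ C_{ρσμ}) is totally antisymmetric in μ, ν, λ. -/
open Finset Matrix

noncomputable section

/-!
The contraction `I_a^ρ I_b^σ C_{ρσx}` inherits antisymmetry in `a, b` from `C`, and `4 H(C, I)` is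
`C` minus the cyclic sum of this contraction over `(μ, ν, λ)`. A cyclic sum of a tensor that is
antisymmetric in its first two slots is totally antisymmetric.
-/

section CyclicSum

variable {ι G : Type*} [AddCommGroup G] (T : ι → ι → ι → G)

theorem cyclic_sum_swap_left (hT : ∀ a b c, T a b c = -T b a c) (μ ν lam : ι) :
    T μ ν lam + T lam μ ν + T ν lam μ = -(T ν μ lam + T lam ν μ + T μ lam ν) := by
  rw [hT ν μ lam, hT lam ν μ, hT μ lam ν]
  abel

theorem cyclic_sum_swap_right (hT : ∀ a b c, T a b c = -T b a c) (μ ν lam : ι) :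
    T μ ν lam + T lam μ ν + T ν lam μ = -(T μ lam ν + T ν μ lam + T lam ν μ) := by
  rw [hT μ lam ν, hT ν μ lam, hT lam ν μ]
  abel

end CyclicSum

section Twist

variable {ι κ R : Type*} [Fintype ι] [CommRing R]

def twist (C : ι → ι → κ → R) (I : Matrix ι ι R) (a b : ι) (x : κ) : R :=
  ∑ ρ, ∑ σ, I a ρ * I b σ * C ρ σ x

theorem twist_swap (C : ι → ι → κ → R) (hC : ∀ ρ σ x, C ρ σ x = -C σ ρ x) (I : Matrix ι ι R)
    (a b : ι) (x : κ) : twist C I a b x = -twist C I b a x := by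
  rw [twist, twist, Finset.sum_comm, ← Finset.sum_neg_distrib]
  refine Finset.sum_congr rfl fun σ _ => ?_
  rw [← Finset.sum_neg_distrib]
  refine Finset.sum_congr rfl fun ρ _ => ?_
  rw [hC σ ρ x]
  ring

end Twist

theorem Hten_eq_sub_cyclic_twist {D : ℕ} (C : Fin D → Fin D → Fin D → ℝ)
    (I : Matrix (Fin D) (Fin D) ℝ) (μ ν lam : Fin D) :
    Hten C I μ ν lam =
      (1/4) * (C μ ν lam - (twist C I μ ν lam + twist C I lam μ ν + twist C I ν lam μ)) := by
  rw [Hten, twist, twist, twist]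
  ring

theorem Hten_totally_antisymmetric_general {D : ℕ} (C : Fin D → Fin D → Fin D → ℝ)
    (hC1 : ∀ μ ν lam, C μ ν lam = -C ν μ lam)
    (hC2 : ∀ μ ν lam, C μ ν lam = -C μ lam ν)
    (I : Matrix (Fin D) (Fin D) ℝ) :
    ∀ μ ν lam : Fin D,
      Hten C I μ ν lam = -Hten C I ν μ lam ∧ Hten C I μ ν lam = -Hten C I μ lam ν := by
  intro μ ν lam
  have hT := twist_swap C hC1 I
  simp only [Hten_eq_sub_cyclic_twist]
  constructor
  · rw [hC1 μ ν lam, cyclic_sum_swap_left _ hT μ ν lam]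
    ring
  · rw [hC2 μ ν lam, cyclic_sum_swap_right _ hT μ ν lam]
    ring

theorem Hten_totally_antisymmetric {D : ℕ} (C : Fin D → Fin D → Fin D → ℝ)
    (hC1 : ∀ μ ν lam, C μ ν lam = -C ν μ lam)
    (hC2 : ∀ μ ν lam, C μ ν lam = -C μ lam ν)
    (I : Matrix (Fin D) (Fin D) ℝ) (hI : I * I = -1) (hIa : Iᵀ = -I) :
    ∀ μ ν lam : Fin D,
      Hten C I μ ν lam = -Hten C I ν μ lam ∧ Hten C I μ ν lam = -Hten C I μ lam ν :=
  Hten_totally_antisymmetric_general C hC1 hC2 I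
end
end
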